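/- Fix real numbers s₁, s₂ and b ∈ ℂ with b ≠ 0. For all x, y ∈ F_b, the two addition results differ by one period of the joint Hamiltonian flow: x +₁ y = φ^{(−(s₁ − ln|b|), −(s₂ + arg(b) − π))}(x +₂ y), where φ^{(t₁,t₂)}(p,q) = (e^{t₁+it₂}·p, e^{−t₁+it₂}·q) and arg is the principal argument. -/

import Mathlib

/-- The fiber `F_b = {(p,q) ∈ ℂ² : −conj(p)·q = b}`. -/
def Fb (b : ℂ) : Set (ℂ × ℂ) := {x | -(starRingEnd ℂ) x.1 * x.2 = b}

/-- Addition with respect to the Lagrangian section `σ₁`. -/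
noncomputable def add1 (s₁ s₂ : ℝ) (x y : ℂ × ℂ) : ℂ × ℂ :=
  (Complex.exp (-(s₁ : ℂ) - Complex.I * (s₂ : ℂ)) * x.1 * y.1,
   Complex.exp ((s₁ : ℂ) - Complex.I * (s₂ : ℂ)) * x.2 / (starRingEnd ℂ) y.1)

/-- Addition with respect to the section `σ₂`. -/
noncomputable def add2 (x y : ℂ × ℂ) : ℂ × ℂ :=
  (x.1 / (starRingEnd ℂ) y.2, x.2 * y.2)

/-- The joint Hamiltonian flow `φ^{(t₁,t₂)}(p,q) = (e^{t₁+it₂}·p, e^{−t₁+it₂}·q)`. -/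
noncomputable def act (t : ℝ × ℝ) (x : ℂ × ℂ) : ℂ × ℂ :=
  (Complex.exp ((t.1 : ℂ) + Complex.I * (t.2 : ℂ)) * x.1,
   Complex.exp (-(t.1 : ℂ) + Complex.I * (t.2 : ℂ)) * x.2)

/-- For `x, y ∈ F_b` with `b ≠ 0`, the two additions differ by one period of the
joint flow: `x +₁ y = φ^{(−(s₁ − ln|b|), −(s₂ + arg(b) − π))}(x +₂ y)`. -/
theorem stmt_11 (s₁ s₂ : ℝ) (b : ℂ) (hb : b ≠ 0)
    (x y : ℂ × ℂ) (hx : x ∈ Fb b) (hy : y ∈ Fb b) :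
    add1 s₁ s₂ x y =
      act (-(s₁ - Real.log (‖b‖)), -(s₂ + Complex.arg b - Real.pi)) (add2 x y) := by
  have hyb : -(starRingEnd ℂ) y.1 * y.2 = b := hy
  have hy1 : (starRingEnd ℂ) y.1 ≠ 0 := by
    intro h; apply hb; rw [← hyb, h]; ring
  have hy2 : (starRingEnd ℂ) y.2 ≠ 0 := by
    intro h
    have h2 : y.2 = 0 := by simpa using congrArg (starRingEnd ℂ) h
    apply hb; rw [← hyb, h2]; ring
  have hL : Complex.exp ((Real.log (‖b‖) : ℂ)) = (‖b‖ : ℂ) := by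
    rw [← Complex.ofReal_exp, Real.exp_log (norm_pos_iff.mpr hb)]
  have hconj : Complex.exp ((Real.log (‖b‖) : ℂ) - Complex.I * (Complex.arg b : ℂ))
      = (starRingEnd ℂ) b := by
    have h := congrArg (starRingEnd ℂ) (Complex.norm_mul_exp_arg_mul_I b)
    rw [map_mul, ← Complex.exp_conj] at h
    rw [Complex.exp_sub, hL, ← h]
    simp [Complex.conj_ofReal, Complex.exp_neg]
    rw [mul_comm Complex.I, div_eq_mul_inv]
  have hbconj : (starRingEnd ℂ) b = -y.1 * (starRingEnd ℂ) y.2 := by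
    rw [← hyb]; simp
  have hbinv : b⁻¹ * (‖b‖ : ℂ)^2 = (starRingEnd ℂ) b := by
    have h := Complex.mul_conj b
    rw [Complex.normSq_eq_norm_sq] at h
    push_cast at h
    field_simp
    linear_combination -h
  have hpi : Complex.exp (Complex.I * (Real.pi : ℂ)) = -1 := by
    rw [mul_comm]; exact Complex.exp_pi_mul_I
  unfold add1 add2 act
  push_cast
  ext <;> simp only
  · -- first component
    have key : Complex.exp ((-(s₁ - Real.log (‖b‖)) : ℂ) +
        Complex.I * (-(s₂ + Complex.arg b - Real.pi) : ℂ))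
        = Complex.exp (-(s₁ : ℂ) - Complex.I * s₂) * (-(starRingEnd ℂ) b) := by
      rw [show ((-(s₁ - Real.log (‖b‖)) : ℂ) +
          Complex.I * (-(s₂ + Complex.arg b - Real.pi) : ℂ))
          = (-(s₁:ℂ) - Complex.I * s₂) + ((Real.log (‖b‖) : ℂ) - Complex.I * (Complex.arg b : ℂ)) + Complex.I * (Real.pi : ℂ) by ring,
        Complex.exp_add, Complex.exp_add, hconj, hpi]
      ring
    push_cast at key
    rw [key, hbconj]
    field_simp
  · -- second component
    have key : Complex.exp ((-(-(s₁ - Real.log (‖b‖))) : ℂ) +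
        Complex.I * (-(s₂ + Complex.arg b - Real.pi) : ℂ))
        = Complex.exp ((s₁ : ℂ) - Complex.I * s₂) * (-b⁻¹) := by
      have hinv : Complex.exp (-(Real.log (‖b‖) : ℂ) - Complex.I * (Complex.arg b : ℂ))
          = (starRingEnd ℂ) b / (‖b‖ : ℂ)^2 := by
        rw [show (-(Real.log (‖b‖) : ℂ) - Complex.I * (Complex.arg b : ℂ))
            = ((Real.log (‖b‖) : ℂ) - Complex.I * (Complex.arg b : ℂ)) - 2 * (Real.log (‖b‖) : ℂ) by ring,
          Complex.exp_sub, hconj]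
        rw [show (2 : ℂ) * (Real.log (‖b‖) : ℂ) = (Real.log (‖b‖) : ℂ) + (Real.log (‖b‖) : ℂ) by ring,
          Complex.exp_add, hL]
        ring
      rw [show ((-(-(s₁ - Real.log (‖b‖))) : ℂ) +
          Complex.I * (-(s₂ + Complex.arg b - Real.pi) : ℂ))
          = ((s₁:ℂ) - Complex.I * s₂) + (-(Real.log (‖b‖) : ℂ) - Complex.I * (Complex.arg b : ℂ)) + Complex.I * (Real.pi : ℂ) by ring,
        Complex.exp_add, Complex.exp_add, hinv, hpi]
      have habs : (‖b‖ : ℂ) ≠ 0 := by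
        simpa using norm_ne_zero_iff.mpr hb
      field_simp
      rw [← hbinv]; field_simp
    push_cast at key
    have hy2' : y.2 ≠ 0 := fun h2 => hy2 (by simp [h2])
    have hy1' : y.1 ≠ 0 := fun h1 => hy1 (by simp [h1])
    rw [key, ← hyb]
    field_simp
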